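/- Let G and H be finite connected simple graphs with n(G) ≥ 2, n(H) ≥ 2, μit(G) ≥ 1 and μit(H) ≥ 1. If the set S(G) of simplicial vertices of G is an independent set and μt(G) = |S(G)|, then μt(G □ H) = μt(G)·μt(H). -/

import Mathlib

open SimpleGraph

/-- `X` is a total mutual-visibility set of `G`: every two vertices of `G` are `X`-visible,
i.e. joined by a shortest path whose internal vertices avoid `X`. -/
def IsTMVSet {V : Type*} (G : SimpleGraph V) (X : Set V) : Prop :=
  ∀ x y : V, ∃ p : G.Walk x y, p.length = G.dist x y ∧
    ∀ w ∈ p.support, w ≠ x → w ≠ y → w ∉ X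

/-- The total mutual-visibility number of `G`. -/
noncomputable def muT {V : Type*} (G : SimpleGraph V) : ℕ :=
  sSup {n : ℕ | ∃ X : Set V, IsTMVSet G X ∧ X.ncard = n}

/-- `D` is a dominating set of `G`. -/
def IsDomSet {V : Type*} (G : SimpleGraph V) (D : Set V) : Prop :=
  ∀ v : V, v ∉ D → ∃ u ∈ D, G.Adj u v

/-- The domination number of `G`. -/
noncomputable def gammaDom {V : Type*} (G : SimpleGraph V) : ℕ :=
  sInf {n : ℕ | ∃ D : Set V, IsDomSet G D ∧ D.ncard = n}

/-- `D` is a connected dominating set of `G`. -/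
def IsConnDomSet {V : Type*} (G : SimpleGraph V) (D : Set V) : Prop :=
  IsDomSet G D ∧ (G.induce D).Connected

/-- The connected domination number of `G`. -/
noncomputable def gammaConnDom {V : Type*} (G : SimpleGraph V) : ℕ :=
  sInf {n : ℕ | ∃ D : Set V, IsConnDomSet G D ∧ D.ncard = n}

/-- The closed neighborhood of a vertex. -/
def closedNbhd {V : Type*} (G : SimpleGraph V) (v : V) : Set V :=
  insert v (G.neighborSet v)

/-- The set of simplicial vertices of `G`. -/
def simpSet {V : Type*} (G : SimpleGraph V) : Set V :=
  {v | G.IsClique (G.neighborSet v)}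

/-- The set `P(G)` of vertices that appear as the unique common closed neighbor of
two vertices. -/
def pSet {V : Type*} (G : SimpleGraph V) : Set V :=
  {v | ∃ u w : V, closedNbhd G u ∩ closedNbhd G w = {v}}

/-- The set `C(G)` of vertices belonging to every maximum total mutual-visibility set. -/
def compulsorySet {V : Type*} (G : SimpleGraph V) : Set V :=
  {v | ∀ X : Set V, IsTMVSet G X → X.ncard = muT G → v ∈ X}

/-- The set `F(G)` of vertices belonging to no maximum total mutual-visibility set. -/
def forbiddenSet {V : Type*} (G : SimpleGraph V) : Set V :=
  {v | ∀ X : Set V, IsTMVSet G X → X.ncard = muT G → v ∉ X}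

/-- The independent total mutual-visibility number of `G`. -/
noncomputable def muIT {V : Type*} (G : SimpleGraph V) : ℕ :=
  sSup {n : ℕ | ∃ X : Set V, IsTMVSet G X ∧ (∀ u ∈ X, ∀ v ∈ X, ¬ G.Adj u v) ∧ X.ncard = n}

/-- The join `G + H` of two graphs. -/
def joinGraph {V W : Type*} (G : SimpleGraph V) (H : SimpleGraph W) :
    SimpleGraph (V ⊕ W) :=
  SimpleGraph.fromRel (fun x y =>
    (∃ a b, x = Sum.inl a ∧ y = Sum.inl b ∧ G.Adj a b) ∨
    (∃ a b, x = Sum.inr a ∧ y = Sum.inr b ∧ H.Adj a b) ∨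
    (∃ a b, x = Sum.inl a ∧ y = Sum.inr b))

/-- The corona product `G ⊙ H`: a copy of `G` together with a copy `Hᵢ` of `H` for each
vertex `uᵢ` of `G`, where `uᵢ` is joined to all vertices of `Hᵢ`. -/
def coronaProd {V W : Type*} (G : SimpleGraph V) (H : SimpleGraph W) :
    SimpleGraph (V ⊕ V × W) :=
  SimpleGraph.fromRel (fun x y =>
    (∃ a b, x = Sum.inl a ∧ y = Sum.inl b ∧ G.Adj a b) ∨
    (∃ i w w', x = Sum.inr (i, w) ∧ y = Sum.inr (i, w') ∧ H.Adj w w') ∨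
    (∃ i w, x = Sum.inl i ∧ y = Sum.inr (i, w)))

/-- The lexicographic product `G ∘ H`. -/
def lexProd {V W : Type*} (G : SimpleGraph V) (H : SimpleGraph W) :
    SimpleGraph (V × W) where
  Adj x y := G.Adj x.1 y.1 ∨ (x.1 = y.1 ∧ H.Adj x.2 y.2)
  symm := ⟨fun x y h => by
    rcases h with h | ⟨h1, h2⟩
    · exact Or.inl h.symm
    · exact Or.inr ⟨h1.symm, h2.symm⟩⟩
  loopless := ⟨fun x h => by
    rcases h with h | ⟨_, h⟩
    · exact G.irrefl h
    · exact H.irrefl h⟩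

/-- `B` induces a 2-connected subgraph of `G`. -/
def IsTwoConnSet {V : Type*} (G : SimpleGraph V) (B : Set V) : Prop :=
  3 ≤ B.ncard ∧ (G.induce B).Connected ∧ ∀ v ∈ B, (G.induce (B \ {v})).Connected

/-!
Upper bound: every layer `G × {b}` of a total mutual-visibility set `Z` of `G □ H` is one of `G`.
Simplicial vertices are never internal vertices of shortest paths, so adding `S(G)` to such a set
keeps it one; hence `μt(G) = |S(G)|` forces every layer, and so `Z`, into `S(G) × V(H)`. Each
fibre `{a} × H` of `Z` is a total mutual-visibility set of `H`, whence `|Z| ≤ |S(G)| μt(H)`.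

Lower bound: if `Y` is a maximum total mutual-visibility set of `H`, then `S(G) × Y` is one of
`G □ H`. Go from `(a₁, b₁)` to `(a₂, b₂)` first along a shortest `b₁,b₂`-path of `H` avoiding `Y`
internally, then along a shortest `a₁,a₂`-path of `G`. The only internal vertex not obviously
outside `S(G) × Y` is the corner `(a₁, b₂)`. If `a₁` is simplicial, first step to the successor
of `a₁` on the `G`-path instead; it is not simplicial, being either internal or, when it is `a₂`,
adjacent to `a₁` while `S(G)` is independent.
-/

open Finset in
theorem Set.ncard_le_ncard_mul_of_fiber_le {α β : Type*} [Finite α] [Finite β]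
    {Z : Set (α × β)} {S : Set α} {n : ℕ} (hZS : ∀ z ∈ Z, z.1 ∈ S)
    (hfiber : ∀ a ∈ S, {b | (a, b) ∈ Z}.ncard ≤ n) : Z.ncard ≤ S.ncard * n := by
  classical
  have := Fintype.ofFinite α
  have := Fintype.ofFinite β
  rw [Set.ncard_eq_toFinset_card', Set.ncard_eq_toFinset_card', mul_comm]
  refine Finset.card_le_mul_card_image_of_maps_to (f := Prod.fst) (by simpa using hZS) n
    fun a ha => ?_
  calc #{z ∈ Z.toFinset | z.1 = a}
      = #({b | (a, b) ∈ Z}.toFinset.map ⟨Prod.mk a, Prod.mk_right_injective a⟩) := by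
        congr 1; ext ⟨a', b⟩; aesop
    _ ≤ n := by
        rw [Finset.card_map, ← Set.ncard_eq_toFinset_card']
        exact hfiber a (by simpa using ha)

namespace SimpleGraph

section Visibility

variable {V : Type*} {G : SimpleGraph V} {X : Set V} {x y z : V}

def IsVisible (G : SimpleGraph V) (X : Set V) (x y : V) : Prop :=
  ∃ p : G.Walk x y, p.length = G.dist x y ∧ ∀ w ∈ p.support, w ≠ x → w ≠ y → w ∉ X

lemma IsVisible.cons (hxy : G.Adj x y) (hy : y ∉ X) (hd : G.dist x z = G.dist y z + 1)
    (h : G.IsVisible X y z) : G.IsVisible X x z := by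
  obtain ⟨p, hp, hpX⟩ := h
  refine ⟨.cons hxy p, by simp [hp, hd], fun w hw hwx hwz => ?_⟩
  rw [Walk.support_cons, List.mem_cons] at hw
  rcases hw with rfl | hw
  · exact absurd rfl hwx
  · by_cases hwy : w = y
    · exact hwy ▸ hy
    · exact hpX w hw hwy hwz

lemma Walk.notMem_simpSet_of_length_eq_dist {w : V} {p : G.Walk x y}
    (hp : p.length = G.dist x y) (hw : w ∈ p.support) (hwx : w ≠ x) (hwy : w ≠ y) :
    w ∉ simpSet G := by
  classical
  intro hsimp
  have hsplit := congrArg length (p.take_spec hw)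
  obtain ⟨a, hwa, q, hq⟩ := exists_eq_cons_of_ne hwx (p.takeUntil w hw).reverse
  obtain ⟨b, hwb, r, hr⟩ := exists_eq_cons_of_ne hwy (p.dropUntil w hw)
  have hqlen := congrArg length hq
  have hrlen := congrArg length hr
  simp only [length_append, length_reverse, length_cons] at hsplit hqlen hrlen
  -- the neighbours `a`, `b` of `w` on `p` are equal or adjacent, so `p` has a shortcut
  have hshort : G.dist x y ≤ q.length + r.length + 1 := by
    by_cases hab : a = b
    · subst hab
      have := dist_le (q.reverse.append r)
      simp only [length_append, length_reverse] at this
      omega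
    · have := dist_le (q.reverse.append (.cons (hsimp hwa hwb hab) r))
      simp only [length_append, length_reverse, length_cons] at this
      omega
  omega

lemma Walk.isVisible_simpSet {p : G.Walk x y} (hp : p.length = G.dist x y) :
    G.IsVisible (simpSet G) x y :=
  ⟨p, hp, fun _ hw hwx hwy => p.notMem_simpSet_of_length_eq_dist hp hw hwx hwy⟩

end Visibility

section BoxProd

variable {α β : Type*} {G : SimpleGraph α} {H : SimpleGraph β}

namespace Walk

@[simp]
lemma length_boxProdLeft {a₁ a₂ : α} (b : β) (p : G.Walk a₁ a₂) :
    (p.boxProdLeft H b).length = p.length :=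
  length_map _ _

@[simp]
lemma length_boxProdRight {b₁ b₂ : β} (a : α) (q : H.Walk b₁ b₂) :
    (q.boxProdRight G a).length = q.length :=
  length_map _ _

@[simp]
lemma support_boxProdLeft {a₁ a₂ : α} (b : β) (p : G.Walk a₁ a₂) :
    (p.boxProdLeft H b).support = p.support.map (·, b) :=
  support_map _ _

@[simp]
lemma support_boxProdRight {b₁ b₂ : β} (a : α) (q : H.Walk b₁ b₂) :
    (q.boxProdRight G a).support = q.support.map (a, ·) :=
  support_map _ _

lemma mem_support_ofBoxProdLeft_iff [DecidableEq β] [DecidableRel G.Adj] {x y : α × β}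
    (p : (G □ H).Walk x y) {a : α} :
    a ∈ p.ofBoxProdLeft.support ↔ ∃ w ∈ p.support, w.1 = a := by
  induction p with
  | nil => simp [ofBoxProdLeft, eq_comm]
  | @cons x z y h p ih =>
    unfold ofBoxProdLeft Or.by_cases
    split_ifs with hG
    · simp [ih, eq_comm]
    · obtain ⟨-, hx⟩ := h.resolve_left hG
      obtain ⟨x₁, x₂⟩ := x
      obtain ⟨z₁, z₂⟩ := z
      obtain rfl : x₁ = z₁ := hx
      simp only [support_cons, List.mem_cons, ih]
      refine ⟨fun ⟨w, hw, hwa⟩ => ⟨w, .inr hw, hwa⟩, ?_⟩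
      rintro ⟨w, rfl | hw, rfl⟩
      exacts [⟨_, p.start_mem_support, rfl⟩, ⟨w, hw, rfl⟩]

lemma mem_support_ofBoxProdRight_iff [DecidableEq α] [DecidableRel H.Adj] {x y : α × β}
    (p : (G □ H).Walk x y) {b : β} :
    b ∈ p.ofBoxProdRight.support ↔ ∃ w ∈ p.support, w.2 = b := by
  induction p with
  | nil => simp [ofBoxProdRight, eq_comm]
  | @cons x z y h p ih =>
    unfold ofBoxProdRight Or.by_cases
    split_ifs with hH
    · simp [ih, eq_comm]
    · obtain ⟨-, hx⟩ := (Or.symm h).resolve_left hH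
      obtain ⟨x₁, x₂⟩ := x
      obtain ⟨z₁, z₂⟩ := z
      obtain rfl : x₂ = z₂ := hx
      simp only [support_cons, List.mem_cons, ih]
      refine ⟨fun ⟨w, hw, hwb⟩ => ⟨w, .inr hw, hwb⟩, ?_⟩
      rintro ⟨w, rfl | hw, rfl⟩
      exacts [⟨_, p.start_mem_support, rfl⟩, ⟨w, hw, rfl⟩]

end Walk

lemma dist_boxProd {x y : α × β} (h : (G □ H).Reachable x y) :
    (G □ H).dist x y = G.dist x.1 y.1 + H.dist x.2 y.2 := by
  obtain ⟨hG, hH⟩ := reachable_boxProd.mp h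
  have := edist_boxProd (G := G) (H := H) x y
  rw [← h.coe_dist_eq_edist, ← hG.coe_dist_eq_edist, ← hH.coe_dist_eq_edist] at this
  exact_mod_cast this

lemma Walk.length_ofBoxProd_eq_dist [DecidableEq α] [DecidableEq β] [DecidableRel G.Adj]
    [DecidableRel H.Adj] {x y : α × β} {p : (G □ H).Walk x y}
    (hp : p.length = (G □ H).dist x y) :
    p.ofBoxProdLeft.length = G.dist x.1 y.1 ∧ p.ofBoxProdRight.length = H.dist x.2 y.2 := by
  obtain ⟨x₁, x₂⟩ := x
  obtain ⟨y₁, y₂⟩ := y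
  rw [dist_boxProd ⟨p⟩, p.length_boxProd] at hp
  have := dist_le p.ofBoxProdLeft
  have := dist_le p.ofBoxProdRight
  constructor <;> omega

lemma IsVisible.boxProd {A : Set α} {B : Set β} {a₁ a₂ : α} {b₁ b₂ : β}
    (hA : G.IsVisible A a₁ a₂) (hB : H.IsVisible B b₁ b₂)
    (hcorner : a₁ = a₂ ∨ (a₁, b₂) ∉ A ×ˢ B) :
    (G □ H).IsVisible (A ×ˢ B) (a₁, b₁) (a₂, b₂) := by
  obtain ⟨p, hp, hpA⟩ := hA
  obtain ⟨q, hq, hqB⟩ := hB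
  refine ⟨(q.boxProdRight G a₁).append (p.boxProdLeft H b₂), ?_, fun w hw hw₁ hw₂ => ?_⟩
  · rw [dist_boxProd (reachable_boxProd.mpr ⟨⟨p⟩, ⟨q⟩⟩)]
    simp [hp, hq, add_comm]
  by_cases hwc : w = (a₁, b₂)
  · rcases hcorner with rfl | hc
    · exact absurd hwc hw₂
    · exact hwc ▸ hc
  rw [Walk.mem_support_append_iff] at hw
  rcases hw with hw | hw
  · obtain ⟨b, hb, rfl⟩ : ∃ b ∈ q.support, (a₁, b) = w := by simpa using hw
    exact fun hmem => hqB b hb (by rintro rfl; exact hw₁ rfl) (by rintro rfl; exact hwc rfl) hmem.2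
  · obtain ⟨a, ha, rfl⟩ : ∃ a ∈ p.support, (a, b₂) = w := by simpa using hw
    exact fun hmem => hpA a ha (by rintro rfl; exact hwc rfl) (by rintro rfl; exact hw₂ rfl) hmem.1

end BoxProd

end SimpleGraph

section TotalMutualVisibility

variable {V : Type*} {G : SimpleGraph V} {X : Set V}

lemma IsTMVSet.union_simpSet (hX : IsTMVSet G X) : IsTMVSet G (X ∪ simpSet G) := by
  intro x y
  obtain ⟨p, hp, hpX⟩ := hX x y
  exact ⟨p, hp, fun w hw hwx hwy hmem =>
    hmem.elim (hpX w hw hwx hwy) (p.notMem_simpSet_of_length_eq_dist hp hw hwx hwy)⟩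

lemma isTMVSet_empty (h : G.Preconnected) : IsTMVSet G ∅ := fun x y =>
  let ⟨p, hp⟩ := (h x y).exists_walk_length_eq_dist
  ⟨p, hp, fun _ _ _ _ => Set.notMem_empty _⟩

lemma bddAbove_ncard_isTMVSet [Finite V] (G : SimpleGraph V) :
    BddAbove {n : ℕ | ∃ X : Set V, IsTMVSet G X ∧ X.ncard = n} :=
  ⟨Nat.card V, by rintro _ ⟨X, -, rfl⟩; exact X.ncard_le_card⟩

lemma IsTMVSet.ncard_le_muT [Finite V] (hX : IsTMVSet G X) : X.ncard ≤ muT G :=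
  le_csSup (bddAbove_ncard_isTMVSet G) ⟨X, hX, rfl⟩

lemma muT_le {n : ℕ} (h : ∀ X : Set V, IsTMVSet G X → X.ncard ≤ n) : muT G ≤ n :=
  csSup_le' (by rintro _ ⟨X, hX, rfl⟩; exact h X hX)

lemma exists_isTMVSet_ncard_eq_muT [Finite V] (h : G.Preconnected) :
    ∃ X : Set V, IsTMVSet G X ∧ X.ncard = muT G :=
  Nat.sSup_mem (s := {n : ℕ | ∃ X : Set V, IsTMVSet G X ∧ X.ncard = n})
    ⟨0, ∅, isTMVSet_empty h, Set.ncard_empty V⟩ (bddAbove_ncard_isTMVSet G)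

lemma IsTMVSet.subset_simpSet_of_muT_eq [Finite V] (hX : IsTMVSet G X)
    (hmu : muT G = (simpSet G).ncard) : X ⊆ simpSet G := by
  have hle : (X ∪ simpSet G).ncard ≤ (simpSet G).ncard := hmu ▸ hX.union_simpSet.ncard_le_muT
  exact Set.union_eq_right.mp
    (Set.eq_of_subset_of_ncard_le Set.subset_union_right hle).symm

end TotalMutualVisibility

section BoxProd

variable {α β : Type*} {G : SimpleGraph α} {H : SimpleGraph β}

lemma IsTMVSet.of_boxProd_left {Z : Set (α × β)} (hZ : IsTMVSet (G □ H) Z) (b : β) :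
    IsTMVSet G {a | (a, b) ∈ Z} := by
  classical
  intro x y
  obtain ⟨p, hp, hpZ⟩ := hZ (x, b) (y, b)
  obtain ⟨hleft, hright⟩ := Walk.length_ofBoxProd_eq_dist hp
  have hlayer : ∀ w ∈ p.support, w.2 = b := by
    have hnil : p.ofBoxProdRight.support = [b] :=
      Walk.nil_iff_support_eq.mp (Walk.length_eq_zero_iff.mp (by simpa using hright))
    intro w hw
    simpa [hnil] using p.mem_support_ofBoxProdRight_iff.mpr ⟨w, hw, rfl⟩
  refine ⟨p.ofBoxProdLeft, hleft, fun a ha hax hay haZ => ?_⟩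
  obtain ⟨w, hw, rfl⟩ := p.mem_support_ofBoxProdLeft_iff.mp ha
  rw [show w = (w.1, b) from Prod.ext rfl (hlayer w hw)] at hw
  exact hpZ _ hw (by simpa using hax) (by simpa using hay) haZ

lemma IsTMVSet.of_boxProd_right {Z : Set (α × β)} (hZ : IsTMVSet (G □ H) Z) (a : α) :
    IsTMVSet H {b | (a, b) ∈ Z} := by
  classical
  intro x y
  obtain ⟨p, hp, hpZ⟩ := hZ (a, x) (a, y)
  obtain ⟨hleft, hright⟩ := Walk.length_ofBoxProd_eq_dist hp
  have hlayer : ∀ w ∈ p.support, w.1 = a := by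
    have hnil : p.ofBoxProdLeft.support = [a] :=
      Walk.nil_iff_support_eq.mp (Walk.length_eq_zero_iff.mp (by simpa using hleft))
    intro w hw
    simpa [hnil] using p.mem_support_ofBoxProdLeft_iff.mpr ⟨w, hw, rfl⟩
  refine ⟨p.ofBoxProdRight, hright, fun b hb hbx hby hbZ => ?_⟩
  obtain ⟨w, hw, rfl⟩ := p.mem_support_ofBoxProdRight_iff.mp hb
  rw [show w = (a, w.2) from Prod.ext (hlayer w hw) rfl] at hw
  exact hpZ _ hw (by simpa using hbx) (by simpa using hby) hbZ

lemma isTMVSet_simpSet_prod (hG : G.Preconnected)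
    (hind : ∀ u ∈ simpSet G, ∀ v ∈ simpSet G, ¬ G.Adj u v) {Y : Set β} (hY : IsTMVSet H Y) :
    IsTMVSet (G □ H) (simpSet G ×ˢ Y) := by
  rintro ⟨a₁, b₁⟩ ⟨a₂, b₂⟩
  obtain ⟨p, hp⟩ := (hG a₁ a₂).exists_walk_length_eq_dist
  by_cases hcorner : a₁ = a₂ ∨ a₁ ∉ simpSet G
  · exact (p.isVisible_simpSet hp).boxProd (hY b₁ b₂) (hcorner.imp_right fun h hmem => h hmem.1)
  obtain ⟨hne, ha₁⟩ : a₁ ≠ a₂ ∧ a₁ ∈ simpSet G := by tauto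
  obtain ⟨a, hadj, p', rfl⟩ := Walk.exists_eq_cons_of_ne hne p
  have ha : a ∉ simpSet G := by
    by_cases ha₂ : a = a₂
    · subst ha₂
      exact fun ha => hind a₁ ha₁ a ha hadj
    · exact Walk.notMem_simpSet_of_length_eq_dist hp (by simp) hadj.ne.symm ha₂
  obtain ⟨r, hr⟩ := (hG a a₂).exists_walk_length_eq_dist
  have := dist_le p'
  have := dist_le (.cons hadj r)
  simp only [Walk.length_cons] at hp this
  have hp' : p'.length = G.dist a a₂ := by omega
  have hH : H.Reachable b₁ b₂ := (hY b₁ b₂).elim fun q _ => ⟨q⟩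
  refine IsVisible.cons (boxProd_adj_left.mpr hadj) (fun h => ha h.1) ?_
    ((p'.isVisible_simpSet hp').boxProd (hY b₁ b₂) (.inr fun h => ha h.1))
  rw [dist_boxProd (reachable_boxProd.mpr ⟨hG _ _, hH⟩),
    dist_boxProd (reachable_boxProd.mpr ⟨hG _ _, hH⟩)]
  dsimp only
  omega

lemma muT_boxProd_le_mul [Finite α] [Finite β] (hmu : muT G = (simpSet G).ncard) :
    muT (G □ H) ≤ muT G * muT H :=
  muT_le fun _ hZ => hmu ▸ Set.ncard_le_ncard_mul_of_fiber_le
    (fun z hz => (hZ.of_boxProd_left z.2).subset_simpSet_of_muT_eq hmu hz)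
    (fun a _ => (hZ.of_boxProd_right a).ncard_le_muT)

lemma ncard_simpSet_mul_muT_le [Finite α] [Finite β] (hG : G.Preconnected)
    (hH : H.Preconnected) (hind : ∀ u ∈ simpSet G, ∀ v ∈ simpSet G, ¬ G.Adj u v) :
    (simpSet G).ncard * muT H ≤ muT (G □ H) := by
  obtain ⟨Y, hY, hYcard⟩ := exists_isTMVSet_ncard_eq_muT hH
  rw [← hYcard, ← Set.ncard_prod]
  exact (isTMVSet_simpSet_prod hG hind hY).ncard_le_muT

end BoxProd

theorem muT_boxProd_eq_mul_general {V W : Type*} [Fintype V] [Fintype W]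
    (G : SimpleGraph V) (H : SimpleGraph W) (hG : G.Connected) (hH : H.Connected)
    (hind : ∀ u ∈ simpSet G, ∀ v ∈ simpSet G, ¬ G.Adj u v)
    (hmu : muT G = (simpSet G).ncard) :
    muT (G □ H) = muT G * muT H := by
  refine le_antisymm (muT_boxProd_le_mul hmu) ?_
  rw [hmu]
  exact ncard_simpSet_mul_muT_le hG.preconnected hH.preconnected hind

/-- If `S(G)` is independent and `μt(G) = |S(G)|`, then
`μt(G □ H) = μt(G) μt(H)`. -/
theorem muT_boxProd_eq_mul {V W : Type*} [Fintype V] [Fintype W]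
    (G : SimpleGraph V) (H : SimpleGraph W) (hG : G.Connected) (hH : H.Connected)
    (hnV : 2 ≤ Fintype.card V) (hnW : 2 ≤ Fintype.card W)
    (hitG : 1 ≤ muIT G) (hitH : 1 ≤ muIT H)
    (hind : ∀ u ∈ simpSet G, ∀ v ∈ simpSet G, ¬ G.Adj u v)
    (hmu : muT G = (simpSet G).ncard) :
    muT (G □ H) = muT G * muT H :=
  muT_boxProd_eq_mul_general G H hG hH hind hmu
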